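/- Let V = V^(1) ⊗ ⋯ ⊗ V^(d) be a tensor product of finite-dimensional complex Hilbert spaces and suppose T ∈ V has a diagonal singular value decomposition whose singular values σ_1 > σ_2 > ⋯ > σ_r > 0 are pairwise distinct. Then the diagonal singular value decomposition of T is unique: if T = ∑_{i=1}^r σ_i v_i and T = ∑_{i=1}^r σ_i w_i are two DSVDs, then v_i = w_i for all i. -/

import Mathlib

noncomputable section

open Finset

abbrev TensorSpace {d : ℕ} (ι : Fin d → Type*) [∀ e, Fintype (ι e)] : Type _ :=
  EuclideanSpace ℂ (∀ e, ι e)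

variable {d : ℕ} {ι : Fin d → Type*} [∀ e, Fintype (ι e)]

/-- A pure tensor: `v⁽¹⁾ ⊗ ⋯ ⊗ v⁽ᵈ⁾`. -/
def IsPure (T : TensorSpace ι) : Prop :=
  ∃ v : ∀ e, ι e → ℂ, ∀ i : ∀ e, ι e, T i = ∏ e, v e (i e)

/-- Nuclear norm of a tensor. -/
def nuclearNorm (T : TensorSpace ι) : ℝ :=
  sInf {c : ℝ | ∃ (r : ℕ) (v : Fin r → TensorSpace ι),
    (∀ i, IsPure (v i)) ∧ T = ∑ i, v i ∧ c = ∑ i, ‖v i‖}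

/-- `[S]_α`. -/
def bracket {κ : Type*} [Fintype κ] (S : κ → TensorSpace ι) (α : ℝ) : ℝ :=
  sSup {c : ℝ | ∃ u : TensorSpace ι, IsPure u ∧ ‖u‖ = 1 ∧
    c = (∑ i, ‖(inner ℂ (S i) u : ℂ)‖ ^ α) ^ (1 / α)}

/-- The spectral norm `[T]`. -/
def tensorSpectralNorm (T : TensorSpace ι) : ℝ :=
  sSup {c : ℝ | ∃ u : TensorSpace ι, IsPure u ∧ ‖u‖ = 1 ∧ c = ‖(inner ℂ T u : ℂ)‖}

/-- `t`-orthogonality of a tuple of unit tensors. -/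
def TOrthogonal {κ : Type*} [Fintype κ] (S : κ → TensorSpace ι) (t : ℝ) : Prop :=
  (∀ i, ‖S i‖ = 1) ∧ bracket S (2 / t) = 1

/-- Diagonal singular value decomposition. -/
def IsDSVD {r : ℕ} (T : TensorSpace ι) (σ : Fin r → ℝ) (v : Fin r → TensorSpace ι) : Prop :=
  (∀ i j : Fin r, i ≤ j → σ j ≤ σ i) ∧ (∀ i, 0 < σ i) ∧ (∀ i, IsPure (v i)) ∧
    TOrthogonal v 2 ∧ T = ∑ i, (σ i : ℂ) • v i

/-- `μ_α`. -/
def mu {κ : Type*} [Fintype κ] [DecidableEq κ] (v : κ → TensorSpace ι) (α : ℝ) : ℝ :=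
  sSup {c : ℝ | ∃ i, c = (∑ j ∈ univ.erase i, ‖(inner ℂ (v i) (v j) : ℂ)‖ ^ α) ^ (1 / α)}

/-! Write `A i k = ⟪w k, v i⟫`. With exponent `2 / 2 = 1`, 2-orthogonality bounds the `ℓ¹`-norm of
every row and column of `A` by `1` and makes `w` orthonormal, and pairing `T` with `w k`
gives `σ k = ∑ i, σ i * A i k`. Going down the singular values,
`σ k ≤ ∑ i, σ i * ‖A i k‖ ≤ σ k * ∑ i, ‖A i k‖ ≤ σ k`, where entries above the diagonal are already
known to vanish; since `σ i < σ k` for `i > k`, column `k` must be the unit vector `e k`, and the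
row bound then clears row `k`. Hence `A = 1`, and unit vectors with `⟪w k, v k⟫ = 1` coincide. -/

theorem eq_zero_of_sum_norm_le_norm {κ E : Type*} [Fintype κ] [NormedAddCommGroup E]
    {f : κ → E} {i j : κ} (h : ∑ k, ‖f k‖ ≤ ‖f j‖) (hij : i ≠ j) : f i = 0 := by
  classical
  have hpair : ‖f i‖ + ‖f j‖ ≤ ∑ k, ‖f k‖ := by
    rw [← Finset.sum_pair (f := fun k ↦ ‖f k‖) hij]
    exact Finset.sum_le_sum_of_subset_of_nonneg (subset_univ _) fun _ _ _ ↦ norm_nonneg _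
  exact norm_le_zero_iff.mp (by linarith)

namespace TOrthogonal

variable {κ : Type*} [Fintype κ] {S : κ → TensorSpace ι}

theorem sum_norm_inner_le_one (hS : TOrthogonal S 2) {u : TensorSpace ι} (hu : IsPure u)
    (hu1 : ‖u‖ = 1) : ∑ i, ‖(inner ℂ (S i) u : ℂ)‖ ≤ 1 := by
  obtain ⟨-, hb⟩ := hS
  rw [bracket, show (2 : ℝ) / 2 = 1 by norm_num] at hb
  simp only [Real.rpow_one, div_one] at hb
  have hbdd : BddAbove {c : ℝ | ∃ u : TensorSpace ι, IsPure u ∧ ‖u‖ = 1 ∧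
      c = ∑ i, ‖(inner ℂ (S i) u : ℂ)‖} := by
    by_contra h
    rw [Real.sSup_of_not_bddAbove h] at hb
    exact zero_ne_one hb
  exact hb ▸ le_csSup hbdd ⟨u, hu, hu1, rfl⟩

theorem orthonormal (hS : TOrthogonal S 2) (hpure : ∀ i, IsPure (S i)) : Orthonormal ℂ S := by
  refine ⟨hS.1, fun {i j} hij ↦
    eq_zero_of_sum_norm_le_norm (f := fun k ↦ inner ℂ (S k) (S j)) ?_ hij⟩
  simpa [inner_self_eq_norm_sq_to_K, hS.1 j] using hS.sum_norm_inner_le_one (hpure j) (hS.1 j)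

end TOrthogonal

namespace Matrix

variable {𝕜 κ : Type*} [RCLike 𝕜] [Fintype κ] [LinearOrder κ] {σ : κ → ℝ} {A : Matrix κ κ 𝕜}

theorem apply_self_eq_one_of_fixed_strictAnti (hσ : StrictAnti σ) (hpos : ∀ i, 0 < σ i)
    (hfix : ∀ k, (σ k : 𝕜) = ∑ i, σ i * A i k) {k : κ} (hcol : ∑ i, ‖A i k‖ ≤ 1)
    (habove : ∀ i < k, A i k = 0) : A k k = 1 := by
  have hweighted : ∑ i, (σ k - σ i) * ‖A i k‖ ≤ 0 := by
    have htriangle : σ k ≤ ∑ i, σ i * ‖A i k‖ := by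
      calc σ k = ‖(σ k : 𝕜)‖ := by simp [abs_of_pos (hpos k)]
        _ ≤ ∑ i, ‖(σ i : 𝕜) * A i k‖ := hfix k ▸ norm_sum_le _ _
        _ = ∑ i, σ i * ‖A i k‖ := by simp [abs_of_pos (hpos _)]
    simp only [sub_mul, Finset.sum_sub_distrib, ← Finset.mul_sum]
    nlinarith [hpos k]
  have hterm_nonneg : ∀ i, 0 ≤ (σ k - σ i) * ‖A i k‖ := fun i ↦ by
    rcases lt_or_ge i k with hik | hki
    · simp [habove i hik]
    · exact mul_nonneg (sub_nonneg.mpr (hσ.antitone hki)) (norm_nonneg _)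
  have hbelow : ∀ i, k < i → A i k = 0 := fun i hki ↦ by
    have hzero := (Finset.sum_eq_zero_iff_of_nonneg fun i _ ↦ hterm_nonneg i).mp
      (le_antisymm hweighted (Finset.sum_nonneg fun i _ ↦ hterm_nonneg i)) i (mem_univ i)
    simpa [(sub_pos.mpr (hσ hki)).ne'] using hzero
  have hsum : ∑ i, (σ i : 𝕜) * A i k = σ k * A k k := by
    refine Finset.sum_eq_single k (fun i _ hik ↦ ?_) (by simp)
    rcases hik.lt_or_gt with hik | hki
    · simp [habove i hik]
    · simp [hbelow i hki]
  exact (mul_eq_left₀ (by exact_mod_cast (hpos k).ne')).mp (hsum ▸ hfix k).symm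

theorem eq_one_of_sum_norm_le_one_of_fixed_strictAnti (hσ : StrictAnti σ) (hpos : ∀ i, 0 < σ i)
    (hfix : ∀ k, (σ k : 𝕜) = ∑ i, σ i * A i k) (hcol : ∀ k, ∑ i, ‖A i k‖ ≤ 1)
    (hrow : ∀ i, ∑ k, ‖A i k‖ ≤ 1) : A = 1 := by
  have hrows : ∀ k, A k k = 1 ∧ ∀ j ≠ k, A k j = 0 := fun k ↦ by
    induction k using WellFoundedLT.induction with
    | _ k ih =>
      have hkk := apply_self_eq_one_of_fixed_strictAnti hσ hpos hfix (hcol k)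
        fun i hik ↦ (ih i hik).2 k hik.ne'
      refine ⟨hkk, fun j hjk ↦ eq_zero_of_sum_norm_le_norm ?_ hjk⟩
      simpa [hkk] using hrow k
  ext i j
  rcases eq_or_ne i j with rfl | hij
  · simp [(hrows i).1]
  · simp [(hrows i).2 j hij.symm, hij]

end Matrix

/-- **Theorem 1.6.** If the singular values of `T` are (pairwise) distinct, then the diagonal
singular value decomposition of `T` is unique. -/
theorem dsvd_unique_of_distinct_singular_values {d r : ℕ} {ι : Fin d → Type*}
    [∀ e, Fintype (ι e)] (T : TensorSpace ι) (σ : Fin r → ℝ)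
    (v w : Fin r → TensorSpace ι)
    (hdistinct : ∀ i j : Fin r, i < j → σ j < σ i)
    (hv : IsDSVD T σ v) (hw : IsDSVD T σ w) :
    ∀ i, v i = w i := by
  obtain ⟨-, hpos, hpure_v, horth_v, rfl⟩ := hv
  obtain ⟨-, -, hpure_w, horth_w, hT⟩ := hw
  have hfix : ∀ k, (σ k : ℂ) = ∑ i, σ i * inner ℂ (w k) (v i) := fun k ↦ by
    rw [← (horth_w.orthonormal hpure_w).inner_right_fintype (fun i ↦ (σ i : ℂ)), ← hT, inner_sum]
    simp only [inner_smul_right]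
  have hA := Matrix.eq_one_of_sum_norm_le_one_of_fixed_strictAnti
    (A := .of fun i k ↦ inner ℂ (w k) (v i)) hdistinct hpos hfix
    (fun k ↦ by
      simpa [norm_inner_symm] using horth_v.sum_norm_inner_le_one (hpure_w k) (horth_w.1 k))
    (fun i ↦ horth_w.sum_norm_inner_le_one (hpure_v i) (horth_v.1 i))
  intro k
  refine ((inner_eq_one_iff_of_norm_eq_one (𝕜 := ℂ) (horth_w.1 k) (horth_v.1 k)).mp ?_).symm
  simpa using congrFun (congrFun hA k) k
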